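/- arXiv:1511.09450 — 6 statements merged into one kernel-verified Lean document; each statement's English description precedes it below -/
import Mathlib

section
/- Let φ be a Prompt-LTL formula over P, let w ∈ (2^P)^ω, and let k ≥ 1. If (w,k) ⊨ φ, then w' ⊨ rel(φ) for every k-spaced p-coloring w' of w. -/
namespace PromptPaper

/-- Prompt-LTL formulas (in negation normal form) over atomic propositions of type `α`. -/
inductive Formula (α : Type) : Type
  | atom    : α → Formula α
  | natom   : α → Formula α
  | and     : Formula α → Formula α → Formula α
  | or      : Formula α → Formula α → Formula α
  | next    : Formula α → Formula α
  | untl    : Formula α → Formula α → Formula α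
  | release : Formula α → Formula α → Formula α
  | promptF : Formula α → Formula α

variable {α ι ο π : Type}

/-- Satisfaction `(w, n, k) ⊨ φ` (arguments: word `w`, bound `k`, position `n`, formula `φ`). -/
def Sat (w : ℕ → Set α) (k : ℕ) : ℕ → Formula α → Prop
  | n, .atom a => a ∈ w n
  | n, .natom a => a ∉ w n
  | n, .and φ ψ => Sat w k n φ ∧ Sat w k n ψ
  | n, .or φ ψ => Sat w k n φ ∨ Sat w k n ψ
  | n, .next φ => Sat w k (n + 1) φ
  | n, .untl φ ψ => ∃ j : ℕ, Sat w k (n + j) ψ ∧ ∀ m < j, Sat w k (n + m) φ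
  | n, .release φ ψ => ∀ j : ℕ, Sat w k (n + j) ψ ∨ ∃ m < j, Sat w k (n + m) φ
  | n, .promptF φ => ∃ j ≤ k, Sat w k (n + j) φ

/-- A formula is an LTL formula if it contains no prompt eventually operator. -/
def isLTL : Formula α → Prop
  | .atom _ => True
  | .natom _ => True
  | .and φ ψ => isLTL φ ∧ isLTL ψ
  | .or φ ψ => isLTL φ ∧ isLTL ψ
  | .next φ => isLTL φ
  | .untl φ ψ => isLTL φ ∧ isLTL ψ
  | .release φ ψ => isLTL φ ∧ isLTL ψ
  | .promptF _ => False

/-- The set of subformulas of a formula. -/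
def subf : Formula α → Set (Formula α)
  | .atom a => {Formula.atom a}
  | .natom a => {Formula.natom a}
  | .and φ ψ => insert (Formula.and φ ψ) (subf φ ∪ subf ψ)
  | .or φ ψ => insert (Formula.or φ ψ) (subf φ ∪ subf ψ)
  | .next φ => insert (Formula.next φ) (subf φ)
  | .untl φ ψ => insert (Formula.untl φ ψ) (subf φ ∪ subf ψ)
  | .release φ ψ => insert (Formula.release φ ψ) (subf φ ∪ subf ψ)
  | .promptF φ => insert (Formula.promptF φ) (subf φ)

/-- The size `|φ|` of a formula: the number of its subformulas. -/
noncomputable def size (φ : Formula α) : ℕ := (subf φ).ncard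

/-- Relativization `rel(φ)`; the fresh proposition `p ∉ P` is modelled by `none : Option α`. -/
def rel : Formula α → Formula (Option α)
  | .atom a => .atom (some a)
  | .natom a => .natom (some a)
  | .and φ ψ => .and (rel φ) (rel ψ)
  | .or φ ψ => .or (rel φ) (rel ψ)
  | .next φ => .next (rel φ)
  | .untl φ ψ => .untl (rel φ) (rel ψ)
  | .release φ ψ => .release (rel φ) (rel ψ)
  | .promptF φ =>
      .and
        (.or (.natom none) (.untl (.atom none) (.untl (.natom none) (rel φ))))
        (.or (.atom none) (.untl (.natom none) (.untl (.atom none) (rel φ))))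

/-- `w'` is a `p`-coloring of `w`: both agree on all propositions in `P`. -/
def IsColoring (w' : ℕ → Set (Option α)) (w : ℕ → Set α) : Prop :=
  ∀ n a, some a ∈ w' n ↔ a ∈ w n

/-- `n` is a change point of `w'`. -/
def ChangePoint (w' : ℕ → Set (Option α)) (n : ℕ) : Prop :=
  n = 0 ∨ ¬ ((none ∈ w' (n - 1)) ↔ (none ∈ w' n))

/-- `m` and `m'` are adjacent change points (the `p`-block between them has length `m' - m`). -/
def AdjacentCP (w' : ℕ → Set (Option α)) (m m' : ℕ) : Prop :=
  m < m' ∧ ChangePoint w' m ∧ ChangePoint w' m' ∧ ∀ l, m < l → l < m' → ¬ ChangePoint w' l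

/-- The truth value of `p` changes infinitely often in `w'`. -/
def InfCP (w' : ℕ → Set (Option α)) : Prop := ∀ n, ∃ m, n < m ∧ ChangePoint w' m

/-- `w'` is `k`-spaced. -/
def Spaced (k : ℕ) (w' : ℕ → Set (Option α)) : Prop :=
  InfCP w' ∧ ∀ m m', AdjacentCP w' m m' → k ≤ m' - m

/-- `w'` is `k`-bounded. -/
def Bounded (k : ℕ) (w' : ℕ → Set (Option α)) : Prop :=
  InfCP w' ∧ ∀ m m', AdjacentCP w' m m' → m' - m ≤ k

/-- The play consistent with strategy `σ` on input sequence `i`; `fi` and `fo` embed input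
and output propositions into the full set of propositions. -/
def play (fi : ι → π) (fo : ο → π) (i : ℕ → Set ι) (σ : List (Set ι) → Set ο) (n : ℕ) :
    Set π :=
  fi '' i n ∪ fo '' σ ((List.range (n + 1)).map i)

/-- `σ` realizes `φ` with respect to `k`: every consistent play satisfies `φ` w.r.t. `k`. -/
def Realizes (fi : ι → π) (fo : ο → π) (σ : List (Set ι) → Set ο) (k : ℕ)
    (φ : Formula π) : Prop :=
  ∀ i : ℕ → Set ι, Sat (play fi fo i σ) k 0 φ

/-- `upd*`, the extension of `upd` to finite input sequences. -/
def updStar {M : Type} (upd : M → Set ι → M) (m0 : M) (l : List (Set ι)) : M :=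
  l.foldl upd m0

/-- The memory structure `(M, m0, upd)` together with next-move function `nxt` implements `σ`. -/
def Implements {M : Type} (m0 : M) (upd : M → Set ι → M) (nxt : M → Set ι → Set ο)
    (σ : List (Set ι) → Set ο) : Prop :=
  ∀ (l : List (Set ι)) (i : Set ι), σ (l ++ [i]) = nxt (updStar upd m0 l) i

/-- `σ` is a finite-state strategy of size at most `n`. -/
def SizeAtMost (σ : List (Set ι) → Set ο) (n : ℕ) : Prop :=
  ∃ (M : Type) (_ : Fintype M) (m0 : M) (upd : M → Set ι → M) (nxt : M → Set ι → Set ο),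
    Fintype.card M ≤ n ∧ Implements m0 upd nxt σ

/-- The set of realizable parameters `R(φ)` over the partition `(ι, ο)`. -/
def RealParams (φ : Formula (ι ⊕ ο)) : Set (ℕ × ℕ) :=
  {nk : ℕ × ℕ | ∃ σ : List (Set ι) → Set ο,
    SizeAtMost σ nk.1 ∧ Realizes Sum.inl Sum.inr σ nk.2 φ}

/-- `(n, k)` is a Pareto position of `φ` (conditions on `n - 1` resp. `k - 1` are vacuously
true if `n = 0` resp. `k = 0`). -/
def Pareto (φ : Formula (ι ⊕ ο)) (n k : ℕ) : Prop :=
  (n, k) ∈ RealParams φ ∧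
    (n = 0 ∨ (n - 1, k) ∉ RealParams φ) ∧
    (k = 0 ∨ (n, k - 1) ∉ RealParams φ)

/-- `true` as a formula (relative to a fixed atomic proposition `a`). -/
def ltrue (a : α) : Formula α := .or (.atom a) (.natom a)

/-- `false` as a formula (relative to a fixed atomic proposition `a`). -/
def lfalse (a : α) : Formula α := .and (.atom a) (.natom a)

/-- `F φ = true U φ`. -/
def ev (a : α) (φ : Formula α) : Formula α := .untl (ltrue a) φ

/-- `G φ = false R φ`. -/
def glob (a : α) (φ : Formula α) : Formula α := .release (lfalse a) φ

/-- Conjunction of a list of formulas. -/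
def conj (a : α) (l : List (Formula α)) : Formula α := l.foldr Formula.and (ltrue a)

/-- The arbiter formula `φ_{r, rp}`, with `I = {q_1, …, q_r}` modelled as `Sum.inl`-side and
`O = {p_1, …, p_r}` as `Sum.inr`-side of `Fin r ⊕ Fin r`. -/
def arbiter (r rp : ℕ) (hr : 0 < r) : Formula (Fin r ⊕ Fin r) :=
  let q : Fin r → Fin r ⊕ Fin r := Sum.inl
  let pr : Fin r → Fin r ⊕ Fin r := Sum.inr
  let a0 : Fin r ⊕ Fin r := Sum.inl ⟨0, hr⟩
  Formula.and
    (conj a0 (((List.finRange r).filter (fun i => decide (i.val < rp))).map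
      (fun i => glob a0 (Formula.or (.natom (q i)) (.promptF (.atom (pr i)))))))
    (Formula.and
      (conj a0 (((List.finRange r).filter (fun i => decide (rp ≤ i.val))).map
        (fun i => glob a0 (Formula.or (.natom (q i)) (ev a0 (.atom (pr i)))))))
      (conj a0 ((List.finRange r).flatMap (fun i =>
        ((List.finRange r).filter (fun j => decide (i ≠ j))).map
          (fun j => glob a0 (Formula.or (.natom (pr i)) (.natom (pr j))))))))


lemma cp_gap {w' : ℕ → Set (Option α)} {k : ℕ} (hsp : Spaced k w')
    {c c' : ℕ} (h : ChangePoint w' c) (h' : ChangePoint w' c') (hlt : c < c') :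
    k ≤ c' - c := by
  classical
  have hex : ∃ m, c < m ∧ ChangePoint w' m := ⟨c', hlt, h'⟩
  have hspec := Nat.find_spec hex
  have hadj : AdjacentCP w' c (Nat.find hex) := by
    refine ⟨hspec.1, h, hspec.2, ?_⟩
    intro l hl1 hl2 hcp
    exact absurd ⟨hl1, hcp⟩ (Nat.find_min hex hl2)
  have h1 : k ≤ Nat.find hex - c := hsp.2 _ _ hadj
  have h2 : Nat.find hex ≤ c' := Nat.find_min' hex ⟨hlt, h'⟩
  omega

lemma const_block {w' : ℕ → Set (Option α)} {k n c : ℕ} (hsp : Spaced k w')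
    (hcp : ChangePoint w' c) (hnc : n < c) :
    ∀ l, c ≤ l → l ≤ n + k → ((none ∈ w' l) ↔ (none ∈ w' c)) := by
  have hnocp : ∀ l, c < l → l ≤ n + k → ¬ ChangePoint w' l := by
    intro l h1 h2 hcpl
    have := cp_gap hsp hcp hcpl h1
    omega
  have key : ∀ d, c + d ≤ n + k → ((none ∈ w' (c + d)) ↔ (none ∈ w' c)) := by
    intro d
    induction d with
    | zero => intro _; exact Iff.rfl
    | succ d ih =>
      intro hle
      have hno := hnocp (c + d + 1) (by omega) hle
      unfold ChangePoint at hno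
      push_neg at hno
      have h2 := hno.2
      simp only [Nat.add_sub_cancel] at h2
      have h3 := ih (by omega)
      tauto
  intro l h1 h2
  have h3 := key (l - c) (by omega)
  have hl : c + (l - c) = l := by omega
  rw [hl] at h3
  exact h3

lemma until_block {w' : ℕ → Set (Option α)} {k : ℕ} (hk : 1 ≤ k) (hsp : Spaced k w')
    (Q : ℕ → Prop)
    (hQcp : ∀ l, ¬ (Q l ↔ Q (l + 1)) → ChangePoint w' (l + 1))
    (hQval : ∀ l l', ((none ∈ w' l) ↔ (none ∈ w' l')) → (Q l ↔ Q l'))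
    (C : ℕ → Prop) (n j : ℕ) (hjk : j ≤ k) (hQn : Q n) (hC : C (n + j)) :
    ∃ j0, (∃ j1, C (n + j0 + j1) ∧ ∀ m < j1, ¬ Q (n + j0 + m)) ∧ ∀ m < j0, Q (n + m) := by
  classical
  by_cases hall : ∀ m < j, Q (n + m)
  · exact ⟨j, ⟨0, by simpa using hC, fun m hm => absurd hm (Nat.not_lt_zero m)⟩, hall⟩
  · push_neg at hall
    obtain ⟨m0, hm0j, hm0⟩ := hall
    have hex : ∃ m, ¬ Q (n + m) := ⟨m0, hm0⟩
    have hc0spec : ¬ Q (n + Nat.find hex) := Nat.find_spec hex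
    set c0 := Nat.find hex with hc0def
    have hc0min : ∀ m < c0, Q (n + m) := fun m hm => not_not.mp (Nat.find_min hex hm)
    have hc0le : c0 ≤ m0 := Nat.find_min' hex hm0
    have hc0pos : 1 ≤ c0 := by
      rcases Nat.eq_zero_or_pos c0 with h | h
      · exfalso; apply hc0spec; rw [h]; simpa using hQn
      · exact h
    have hcp : ChangePoint w' (n + c0) := by
      have hq1 : Q (n + (c0 - 1)) := hc0min _ (by omega)
      have heq : n + (c0 - 1) + 1 = n + c0 := by omega
      have h4 := hQcp (n + (c0 - 1)) (by rw [heq]; tauto)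
      rwa [heq] at h4
    have hconst : ∀ l, n + c0 ≤ l → l ≤ n + k → ¬ Q l := by
      intro l h1 h2
      have hv := const_block (n := n) hsp hcp (by omega) l h1 h2
      have h5 := hQval l (n + c0) hv
      tauto
    refine ⟨c0, ⟨j - c0, ?_, ?_⟩, hc0min⟩
    · have heq : n + c0 + (j - c0) = n + j := by omega
      rwa [heq]
    · intro m hm
      exact hconst (n + c0 + m) (by omega) (by omega)

lemma sat_rel {α : Type} {φ : Formula α} {w : ℕ → Set α} {w' : ℕ → Set (Option α)} {k : ℕ}
    (hk : 1 ≤ k) (hcol : IsColoring w' w) (hsp : Spaced k w') :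
    ∀ n, Sat w k n φ → Sat w' 0 n (rel φ) := by
  induction φ with
  | atom a => intro n h; exact (hcol n a).mpr h
  | natom a => intro n h; exact fun hc => h ((hcol n a).mp hc)
  | and φ ψ ihφ ihψ => intro n h; exact ⟨ihφ n h.1, ihψ n h.2⟩
  | or φ ψ ihφ ihψ =>
      intro n h
      rcases h with h | h
      exacts [Or.inl (ihφ n h), Or.inr (ihψ n h)]
  | next φ ih => intro n h; exact ih (n + 1) h
  | untl φ ψ ihφ ihψ =>
      intro n h
      obtain ⟨j, hψ, hφ⟩ := h
      exact ⟨j, ihψ _ hψ, fun m hm => ihφ _ (hφ m hm)⟩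
  | release φ ψ ihφ ihψ =>
      intro n h j
      rcases h j with hψ | ⟨m, hm, hφ⟩
      exacts [Or.inl (ihψ _ hψ), Or.inr ⟨m, hm, ihφ _ hφ⟩]
  | promptF φ ih =>
      intro n h
      obtain ⟨j, hjk, hφ⟩ := h
      have hC : Sat w' 0 (n + j) (rel φ) := ih _ hφ
      simp only [rel, Sat]
      by_cases hp : none ∈ w' n
      · refine ⟨Or.inr ?_, Or.inl hp⟩
        have hres := until_block hk hsp (fun l => none ∈ w' l)
          (fun l hl => Or.inr (by simpa using hl))
          (fun l l' h => h)
          (fun l => Sat w' 0 l (rel φ)) n j hjk hp hC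
        obtain ⟨j0, ⟨j1, h1, h2⟩, h3⟩ := hres
        exact ⟨j0, ⟨j1, h1, h2⟩, h3⟩
      · refine ⟨Or.inl hp, Or.inr ?_⟩
        have hres := until_block hk hsp (fun l => none ∉ w' l)
          (fun l hl => Or.inr (by simp only [Nat.add_sub_cancel]; tauto))
          (fun l l' h => by tauto)
          (fun l => Sat w' 0 l (rel φ)) n j hjk hp hC
        obtain ⟨j0, ⟨j1, h1, h2⟩, h3⟩ := hres
        exact ⟨j0, ⟨j1, h1, fun m hm => not_not.mp (h2 m hm)⟩, h3⟩

/-- if `(w, k) ⊨ φ`, then `w' ⊨ rel(φ)` for every `k`-spaced `p`-coloring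
`w'` of `w`. -/
theorem rel_of_spaced_coloring (α : Type) [Fintype α] (φ : Formula α) (w : ℕ → Set α)
    (k : ℕ) (hk : 1 ≤ k) (h : Sat w k 0 φ) :
    ∀ w' : ℕ → Set (Option α), IsColoring w' w → Spaced k w' → Sat w' 0 0 (rel φ) := by
  intro w' hcol hsp
  exact sat_rel hk hcol hsp 0 h

end PromptPaper
end

section
/- Let φ be a Prompt-LTL formula over P, let w ∈ (2^P)^ω, and let k ≥ 1. If w' is a k-bounded p-coloring of w such that w' ⊨ rel(φ), then (w,2k) ⊨ φ. -/
namespace PromptPaper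

variable {α ι ο π : Type}

open Classical in
private lemma run_le {α : Type} {w' : ℕ → Set (Option α)} {k : ℕ} (hbnd : Bounded k w')
    (s m : ℕ)
    (hc : ∀ i j, i < m → j < m → ((none ∈ w' (s + i)) ↔ (none ∈ w' (s + j)))) :
    m ≤ k := by
  rcases Nat.eq_zero_or_pos m with rfl | hm
  · exact Nat.zero_le k
  classical
  set m0 := Nat.findGreatest (fun l => ChangePoint w' l) s with hm0def
  have hcp0 : ChangePoint w' 0 := Or.inl rfl
  have hm0le : m0 ≤ s := Nat.findGreatest_le s
  have hm0cp : ChangePoint w' m0 :=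
    Nat.findGreatest_spec (Nat.zero_le s) hcp0
  have hex : ∃ m', s < m' ∧ ChangePoint w' m' := hbnd.1 s
  set m' := Nat.find hex with hm'def
  have hm's : s < m' := (Nat.find_spec hex).1
  have hm'cp : ChangePoint w' m' := (Nat.find_spec hex).2
  have hadj : AdjacentCP w' m0 m' := by
    refine ⟨by omega, hm0cp, hm'cp, ?_⟩
    intro l hl1 hl2 hlcp
    by_cases hls : l ≤ s
    · exact Nat.findGreatest_is_greatest hl1 hls hlcp
    · exact (Nat.find_min hex hl2) ⟨by omega, hlcp⟩
  have hk' : m' - m0 ≤ k := hbnd.2 m0 m' hadj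
  -- the run lies within a single block: m' ≥ s + m
  have hrun : s + m ≤ m' := by
    by_contra hcon
    push_neg at hcon
    -- m' = s + i with 1 ≤ i ≤ m - 1
    obtain ⟨i, hi⟩ : ∃ i, m' = s + i := ⟨m' - s, by omega⟩
    have hi1 : 1 ≤ i := by omega
    have hi2 : i < m := by omega
    rcases hm'cp with h0 | hne
    · omega
    · apply hne
      rw [hi]
      have : s + i - 1 = s + (i - 1) := by omega
      rw [this]
      exact hc (i - 1) i (by omega) hi2
  omega



private lemma key_sat {α : Type} (φ : Formula α) {w : ℕ → Set α} {k : ℕ}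
    {w' : ℕ → Set (Option α)} (hcol : IsColoring w' w) (hbnd : Bounded k w') :
    ∀ n, Sat w' 0 n (rel φ) → Sat w (2 * k) n φ := by
  induction φ with
  | atom a => intro n h; exact (hcol n a).mp h
  | natom a => intro n h; exact fun hx => h ((hcol n a).mpr hx)
  | and φ ψ ihφ ihψ => intro n h; exact ⟨ihφ n h.1, ihψ n h.2⟩
  | or φ ψ ihφ ihψ =>
      intro n h
      exact h.elim (fun h => Or.inl (ihφ n h)) (fun h => Or.inr (ihψ n h))
  | next φ ih => intro n h; exact ih (n + 1) h
  | untl φ ψ ihφ ihψ =>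
      intro n h
      obtain ⟨j, hj, hm⟩ := h
      exact ⟨j, ihψ _ hj, fun m hm' => ihφ _ (hm m hm')⟩
  | release φ ψ ihφ ihψ =>
      intro n h
      intro j
      rcases h j with h' | ⟨m, hm, hφ⟩
      · exact Or.inl (ihψ _ h')
      · exact Or.inr ⟨m, hm, ihφ _ hφ⟩
  | promptF φ ih =>
      intro n h
      obtain ⟨h1, h2⟩ := h
      by_cases hp : none ∈ w' n
      · rcases h1 with habs | ⟨j1, hj1, hall1⟩
        · exact absurd hp habs
        obtain ⟨j2, hj2, hall2⟩ := hj1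
        have hb1 : j1 ≤ k := run_le hbnd n j1 (fun i j hi hj =>
          iff_of_true (hall1 i hi) (hall1 j hj))
        have hb2 : j2 ≤ k := run_le hbnd (n + j1) j2 (fun i j hi hj =>
          iff_of_false (hall2 i hi) (hall2 j hj))
        refine ⟨j1 + j2, by omega, ?_⟩
        rw [← add_assoc]
        exact ih _ hj2
      · rcases h2 with habs | ⟨j1, hj1, hall1⟩
        · exact absurd habs hp
        obtain ⟨j2, hj2, hall2⟩ := hj1
        have hb1 : j1 ≤ k := run_le hbnd n j1 (fun i j hi hj =>
          iff_of_false (hall1 i hi) (hall1 j hj))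
        have hb2 : j2 ≤ k := run_le hbnd (n + j1) j2 (fun i j hi hj =>
          iff_of_true (hall2 i hi) (hall2 j hj))
        refine ⟨j1 + j2, by omega, ?_⟩
        rw [← add_assoc]
        exact ih _ hj2


/-- if `w'` is a `k`-bounded `p`-coloring of `w` with `w' ⊨ rel(φ)`, then
`(w, 2k) ⊨ φ`. -/
theorem prompt_of_bounded_coloring (α : Type) [Fintype α] (φ : Formula α) (w : ℕ → Set α)
    (k : ℕ) (hk : 1 ≤ k) (w' : ℕ → Set (Option α)) (hcol : IsColoring w' w)
    (hbnd : Bounded k w') (h : Sat w' 0 0 (rel φ)) :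
    Sat w (2 * k) 0 φ := by
  exact key_sat φ hcol hbnd 0 h

end PromptPaper
end

section
/- Let φ be a Prompt-LTL formula over P with partition (I,O) and let k ≥ 1. If some strategy σ : (2^I)^+ → 2^O realizes φ with respect to k, then there exists a strategy σ' : (2^I)^+ → 2^{O∪{p}} that realizes the LTL formula rel(φ) ∧ ψ_k over the partition (I, O∪{p}). -/
namespace PromptPaper

variable {α ι ο π : Type}

/-! ### Auxiliary lemmas for Statement 5 -/

section AuxStatement5

variable {β : Type}

/-- In a word whose `p`-pattern is "`p` holds at `n` iff `(n/k) % 2 = 0`", change points are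
exactly the multiples of `k`. -/
lemma cp_iff_aux {k : ℕ} (hk : 1 ≤ k) (w' : ℕ → Set (Option β))
    (hp : ∀ n, none ∈ w' n ↔ (n / k) % 2 = 0) (m : ℕ) :
    ChangePoint w' m ↔ k ∣ m := by
  cases m with
  | zero => simp [ChangePoint]
  | succ t =>
    simp only [ChangePoint, Nat.succ_ne_zero, false_or, Nat.succ_sub_one, hp]
    rw [Nat.succ_div]
    by_cases hd : k ∣ t + 1
    · simp only [hd, if_true, iff_true]
      omega
    · simp [hd]

/-- The alternating pattern of blocks of length exactly `k` is `k`-bounded. -/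
lemma bounded_of_pattern {k : ℕ} (hk : 1 ≤ k) (w' : ℕ → Set (Option β))
    (hp : ∀ n, none ∈ w' n ↔ (n / k) % 2 = 0) : Bounded k w' := by
  have hcp := cp_iff_aux hk w' hp
  have hk' : 0 < k := hk
  constructor
  · intro n
    refine ⟨(n / k + 1) * k, (Nat.div_lt_iff_lt_mul hk').mp (Nat.lt_succ_self _),
      (hcp _).mpr ⟨n / k + 1, by ring⟩⟩
  · rintro m m' ⟨h1, h2, h3, h4⟩
    by_contra hgt
    push_neg at hgt
    obtain ⟨c, hc⟩ := (hcp m).mp h2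
    have hmk : ChangePoint w' (m + k) := (hcp _).mpr ⟨c + 1, by rw [hc]; ring⟩
    exact h4 (m + k) (by omega) (by omega) hmk

/-- A generic helper to witness nested untils across (at most) one change point `c`. -/
lemma untl_helper (w' : ℕ → Set (Option β)) (θ ξ1 ξ2 : Formula (Option β))
    (n e c : ℕ) (hne : n ≤ e)
    (h1 : ∀ m, n ≤ m → m < c → m < e → Sat w' 0 m ξ1)
    (h2 : ∀ m, c ≤ m → m < e → Sat w' 0 m ξ2)
    (hθ : Sat w' 0 e θ) :
    Sat w' 0 n (Formula.untl ξ1 (Formula.untl ξ2 θ)) := by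
  rcases le_or_gt c e with hce | hec
  · rcases le_or_gt n c with hnc | hcn
    · refine ⟨c - n, ⟨e - c, ?_, ?_⟩, ?_⟩
      · have hrw : n + (c - n) + (e - c) = e := by omega
        rw [hrw]; exact hθ
      · intro m hm
        have hrw : n + (c - n) + m = c + m := by omega
        rw [hrw]
        exact h2 (c + m) (by omega) (by omega)
      · intro m hm
        exact h1 (n + m) (by omega) (by omega) (by omega)
    · refine ⟨0, ⟨e - n, ?_, ?_⟩, ?_⟩
      · have hrw : n + 0 + (e - n) = e := by omega
        rw [hrw]; exact hθ
      · intro m hm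
        have hrw : n + 0 + m = n + m := by omega
        rw [hrw]
        exact h2 (n + m) (by omega) (by omega)
      · intro m hm; omega
  · refine ⟨e - n, ⟨0, ?_, ?_⟩, ?_⟩
    · have hrw : n + (e - n) + 0 = e := by omega
      rw [hrw]; exact hθ
    · intro m hm; omega
    · intro m hm
      exact h1 (n + m) (by omega) (by omega) (by omega)

/-- Main lemma: a `k`-satisfying word, colored by the alternating pattern with blocks of
length exactly `k`, satisfies the relativization. -/
lemma sat_rel_of_pattern {k : ℕ} (hk : 1 ≤ k) (w : ℕ → Set β) (w' : ℕ → Set (Option β))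
    (hc : ∀ n a, some a ∈ w' n ↔ a ∈ w n)
    (hp : ∀ n, none ∈ w' n ↔ (n / k) % 2 = 0) :
    ∀ (φ : Formula β) (n : ℕ), Sat w k n φ → Sat w' 0 n (rel φ) := by
  have hk' : 0 < k := hk
  intro φ
  induction φ with
  | atom a => intro n hs; exact (hc n a).mpr hs
  | natom a => intro n hs; exact fun hmem => hs ((hc n a).mp hmem)
  | and φ ψ ih1 ih2 => intro n hs; exact ⟨ih1 n hs.1, ih2 n hs.2⟩
  | or φ ψ ih1 ih2 =>
      intro n hs
      exact hs.elim (fun hh => Or.inl (ih1 n hh)) (fun hh => Or.inr (ih2 n hh))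
  | next φ ih => intro n hs; exact ih (n + 1) hs
  | untl φ ψ ih1 ih2 =>
      intro n hs
      obtain ⟨j, hj, hm⟩ := hs
      exact ⟨j, ih2 _ hj, fun m hm' => ih1 _ (hm m hm')⟩
  | release φ ψ ih1 ih2 =>
      intro n hs j
      rcases hs j with hh | ⟨m, hm, hh⟩
      · exact Or.inl (ih2 _ hh)
      · exact Or.inr ⟨m, hm, ih1 _ hh⟩
  | promptF φ ih =>
      intro n hs
      obtain ⟨j, hj, hsat⟩ := hs
      have hrel : Sat w' 0 (n + j) (rel φ) := ih _ hsat
      set c := (n / k + 1) * k with hcdef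
      have hdiv1 : ∀ m, n ≤ m → m < c → m / k = n / k := by
        intro m hm1 hm2
        apply Nat.div_eq_of_lt_le
        · calc n / k * k ≤ n := Nat.div_mul_le_self n k
            _ ≤ m := hm1
        · exact hm2
      have hdiv2 : ∀ m, c ≤ m → m ≤ n + j → m / k = n / k + 1 := by
        intro m hm1 hm2
        apply Nat.div_eq_of_lt_le
        · rw [← hcdef]; exact hm1
        · have hn : n < c := (Nat.div_lt_iff_lt_mul hk').mp (Nat.lt_succ_self _)
          have hkk : (n / k + 1 + 1) * k = c + k := by rw [hcdef]; ring
          linarith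
      by_cases hb : (n / k) % 2 = 0
      · constructor
        · refine Or.inr (untl_helper w' (rel φ) (.atom none) (.natom none) n (n + j) c
            (by omega) ?_ ?_ hrel)
          · intro m hm1 hm2 _
            exact (hp m).mpr (by rw [hdiv1 m hm1 hm2]; exact hb)
          · intro m hm1 hm2
            intro hmem
            have h2 := (hp m).mp hmem
            rw [hdiv2 m hm1 (by omega)] at h2
            omega
        · exact Or.inl ((hp n).mpr hb)
      · constructor
        · exact Or.inl (fun hmem => hb ((hp n).mp hmem))
        · refine Or.inr (untl_helper w' (rel φ) (.natom none) (.atom none) n (n + j) c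
            (by omega) ?_ ?_ hrel)
          · intro m hm1 hm2 _
            intro hmem
            have h2 := (hp m).mp hmem
            rw [hdiv1 m hm1 hm2] at h2
            exact hb h2
          · intro m hm1 hm2
            refine (hp m).mpr ?_
            rw [hdiv2 m hm1 (by omega)]
            omega

end AuxStatement5

/-- a strategy realizing `φ` w.r.t. `k` can be turned into a strategy
(additionally controlling the fresh proposition `p`) realizing `rel(φ) ∧ ψ_k`. -/
theorem alternating_color_prompt_to_ltl (ι ο : Type) [Fintype ι] [Fintype ο]
    (φ : Formula (ι ⊕ ο)) (k : ℕ) (hk : 1 ≤ k)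
    (ψ : Formula (Option (ι ⊕ ο))) (hψ : isLTL ψ)
    (hchar : ∀ w' : ℕ → Set (Option (ι ⊕ ο)), Sat w' 0 0 ψ ↔ Bounded k w')
    (σ : List (Set ι) → Set ο) (h : Realizes Sum.inl Sum.inr σ k φ) :
    ∃ σ' : List (Set ι) → Set (Option ο),
      Realizes (fun a => some (Sum.inl a)) (Option.map Sum.inr) σ' 0
        (Formula.and (rel φ) ψ) := by
  classical
  refine ⟨fun l => (some '' σ l) ∪ {x | x = none ∧ ((l.length - 1) / k) % 2 = 0}, ?_⟩
  intro i
  set σ' : List (Set ι) → Set (Option ο) :=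
    fun l => (some '' σ l) ∪ {x | x = none ∧ ((l.length - 1) / k) % 2 = 0} with hσ'
  set w : ℕ → Set (ι ⊕ ο) := play Sum.inl Sum.inr i σ with hw
  set w' : ℕ → Set (Option (ι ⊕ ο)) :=
    play (fun a => some (Sum.inl a)) (Option.map Sum.inr) i σ' with hw'
  have hlen : ∀ n : ℕ, ((List.range (n + 1)).map i).length = n + 1 := by simp
  have hp : ∀ n, none ∈ w' n ↔ (n / k) % 2 = 0 := by
    intro n
    simp only [hw', play, hσ', Set.mem_union, Set.mem_image, Set.mem_setOf_eq, hlen]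
    constructor
    · rintro (⟨a, _, hcontra⟩ | ⟨y, hy, hmap⟩)
      · exact absurd hcontra (by simp)
      · rcases hy with ⟨o, _, rfl⟩ | ⟨rfl, hpat⟩
        · exact absurd hmap (by simp)
        · simpa using hpat
    · intro hpat
      exact Or.inr ⟨none, Or.inr ⟨rfl, by simpa using hpat⟩, rfl⟩
  have hc : ∀ n a, some a ∈ w' n ↔ a ∈ w n := by
    intro n a
    simp only [hw', hw, play, hσ', Set.mem_union, Set.mem_image, Set.mem_setOf_eq, hlen]
    constructor
    · rintro (⟨x, hx, hxa⟩ | ⟨y, hy, hmap⟩)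
      · exact Or.inl ⟨x, hx, by simpa using hxa⟩
      · rcases hy with ⟨o, ho, rfl⟩ | ⟨rfl, _⟩
        · exact Or.inr ⟨o, ho, by simpa using hmap⟩
        · exact absurd hmap (by simp)
    · rintro (⟨x, hx, rfl⟩ | ⟨o, ho, rfl⟩)
      · exact Or.inl ⟨x, hx, rfl⟩
      · exact Or.inr ⟨some o, Or.inl ⟨o, ho, rfl⟩, rfl⟩
  constructor
  · exact sat_rel_of_pattern hk w w' hc hp φ 0 (h i)
  · exact (hchar w').mpr (bounded_of_pattern hk w' hp)

end PromptPaper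
end

section
/- Let φ be a Prompt-LTL formula over P with partition (I,O) and let k ≥ 1. If some strategy σ' : (2^I)^+ → 2^{O∪{p}} realizes the LTL formula rel(φ) ∧ ψ_k over the partition (I, O∪{p}), then there exists a strategy σ : (2^I)^+ → 2^O that realizes φ with respect to 2k. -/
/-! On a `k`-bounded colouring of a play, `rel (F_P φ)` forces `rel φ` to hold before the end
of the `p`-block after the current one, hence within `2k` steps; by induction on `φ`, `rel φ`
thus implies `φ` with respect to `2k` on the underlying play. Dropping `p` from the moves of a
strategy realizing `rel φ ∧ ψ_k` therefore yields a strategy realizing `φ` with respect to `2k`. -/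

namespace PromptPaper

variable {α ι ο π : Type}

lemma InfCP.exists_adjacentCP_le_lt {β : Type} {w' : ℕ → Set (Option β)} (hinf : InfCP w')
    (n : ℕ) : ∃ m m', AdjacentCP w' m m' ∧ m ≤ n ∧ n < m' := by
  classical
  have hnext : ∃ m', n < m' ∧ ChangePoint w' m' := hinf n
  obtain ⟨hlt, hcp⟩ := Nat.find_spec hnext
  refine ⟨Nat.findGreatest (ChangePoint w') n, Nat.find hnext,
    ⟨by have := Nat.findGreatest_le (P := ChangePoint w') n; omega,
      Nat.findGreatest_spec (Nat.zero_le n) (Or.inl rfl), hcp, fun l hl hl' hl_cp => ?_⟩,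
    Nat.findGreatest_le n, hlt⟩
  rcases le_or_gt l n with hle | hgt
  · exact Nat.findGreatest_is_greatest hl hle hl_cp
  · exact Nat.find_min hnext hl' ⟨hgt, hl_cp⟩

lemma Bounded.le_of_forall_mem_iff {β : Type} {k : ℕ} {w' : ℕ → Set (Option β)}
    (hb : Bounded k w') {n j : ℕ} {c : Prop} (hc : ∀ m < j, none ∈ w' (n + m) ↔ c) :
    j ≤ k := by
  obtain ⟨m, m', hadj, hm, hm'⟩ := hb.1.exists_adjacentCP_le_lt n
  have hblock := hb.2 m m' hadj
  obtain ⟨-, -, hcp', -⟩ := hadj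
  suffices n + j ≤ m' by omega
  by_contra! hlt
  rcases hcp' with h0 | hchange
  · omega
  · apply hchange
    rw [show m' - 1 = n + (m' - 1 - n) by omega, show m' = n + (m' - n) by omega,
      hc _ (by omega), hc _ (by omega)]

lemma Bounded.exists_le_of_sat_untl_atom_none {β : Type} {k K n : ℕ}
    {w' : ℕ → Set (Option β)} (hb : Bounded k w') {χ : Formula (Option β)}
    (h : Sat w' K n (.untl (.atom none) χ)) : ∃ j ≤ k, Sat w' K (n + j) χ := by
  obtain ⟨j, hχ, hp⟩ := h
  exact ⟨j, hb.le_of_forall_mem_iff (c := True) fun m hm => iff_true_intro (hp m hm), hχ⟩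

lemma Bounded.exists_le_of_sat_untl_natom_none {β : Type} {k K n : ℕ}
    {w' : ℕ → Set (Option β)} (hb : Bounded k w') {χ : Formula (Option β)}
    (h : Sat w' K n (.untl (.natom none) χ)) : ∃ j ≤ k, Sat w' K (n + j) χ := by
  obtain ⟨j, hχ, hp⟩ := h
  exact ⟨j, hb.le_of_forall_mem_iff (c := False) fun m hm => iff_false_intro (hp m hm), hχ⟩

/-- Whatever the colour of position `n`, one of the two conjuncts of `rel (F_P φ)` asks to reach
`rel φ` through at most two `p`-blocks, each of length at most `k`. -/
lemma Bounded.exists_le_two_mul_of_sat_rel_promptF {β : Type} {k K n : ℕ}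
    {w' : ℕ → Set (Option β)} (hb : Bounded k w') {φ : Formula β}
    (h : Sat w' K n (rel (.promptF φ))) : ∃ j ≤ 2 * k, Sat w' K (n + j) (rel φ) := by
  have hblocks : ∃ j₁ ≤ k, ∃ j₂ ≤ k, Sat w' K (n + j₁ + j₂) (rel φ) := by
    obtain ⟨h₁ | h₁, h₂⟩ := h
    · obtain ⟨j₁, hj₁, h'⟩ := hb.exists_le_of_sat_untl_natom_none (h₂.resolve_left h₁)
      exact ⟨j₁, hj₁, hb.exists_le_of_sat_untl_atom_none h'⟩
    · obtain ⟨j₁, hj₁, h'⟩ := hb.exists_le_of_sat_untl_atom_none h₁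
      exact ⟨j₁, hj₁, hb.exists_le_of_sat_untl_natom_none h'⟩
  obtain ⟨j₁, hj₁, j₂, hj₂, hsat⟩ := hblocks
  exact ⟨j₁ + j₂, by omega, by rwa [← Nat.add_assoc]⟩

lemma Bounded.sat_of_sat_rel {β : Type} {k K : ℕ} {w' : ℕ → Set (Option β)}
    (hb : Bounded k w') {w : ℕ → Set β} (hcol : IsColoring w' w) (φ : Formula β) (n : ℕ)
    (h : Sat w' K n (rel φ)) : Sat w (2 * k) n φ := by
  induction φ generalizing n with
  | atom a => exact (hcol n a).mp h
  | natom a => exact fun ha => h ((hcol n a).mpr ha)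
  | and φ ψ ihφ ihψ => exact ⟨ihφ n h.1, ihψ n h.2⟩
  | or φ ψ ihφ ihψ => exact h.imp (ihφ n) (ihψ n)
  | next φ ihφ => exact ihφ (n + 1) h
  | untl φ ψ ihφ ihψ =>
    obtain ⟨j, hψ, hφ⟩ := h
    exact ⟨j, ihψ _ hψ, fun m hm => ihφ _ (hφ m hm)⟩
  | release φ ψ ihφ ihψ =>
    exact fun j => (h j).imp (ihψ _) fun ⟨m, hm, hφ⟩ => ⟨m, hm, ihφ _ hφ⟩
  | promptF φ ihφ =>
    obtain ⟨j, hj, hsat⟩ := hb.exists_le_two_mul_of_sat_rel_promptF h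
    exact ⟨j, hj, ihφ _ hsat⟩

lemma isColoring_play {ι ο π : Type} (fi : ι → π) (fo : ο → π) (i : ℕ → Set ι)
    (σ' : List (Set ι) → Set (Option ο)) :
    IsColoring (play (fun a => some (fi a)) (Option.map fo) i σ')
      (play fi fo i fun l => some ⁻¹' σ' l) := by
  intro n a
  simp only [play, Set.mem_union, Set.mem_image, Set.mem_preimage, Option.some_inj]
  constructor
  · rintro (h | ⟨_ | o, ho, h⟩)
    · exact Or.inl h
    · simp at h
    · exact Or.inr ⟨o, ho, Option.some_inj.mp h⟩
  · rintro (h | ⟨o, ho, rfl⟩)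
    · exact Or.inl h
    · exact Or.inr ⟨some o, ho, rfl⟩

theorem alternating_color_ltl_to_prompt_general (ι ο : Type)
    (φ : Formula (ι ⊕ ο)) (k : ℕ)
    (ψ : Formula (Option (ι ⊕ ο)))
    (hchar : ∀ w' : ℕ → Set (Option (ι ⊕ ο)), Sat w' 0 0 ψ ↔ Bounded k w')
    (σ' : List (Set ι) → Set (Option ο))
    (h : Realizes (fun a => some (Sum.inl a)) (Option.map Sum.inr) σ' 0
      (Formula.and (rel φ) ψ)) :
    ∃ σ : List (Set ι) → Set ο, Realizes Sum.inl Sum.inr σ (2 * k) φ := by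
  refine ⟨fun l => some ⁻¹' σ' l, fun i => ?_⟩
  obtain ⟨hrel, hbounded⟩ := h i
  exact ((hchar _).mp hbounded).sat_of_sat_rel (isColoring_play _ _ i σ') φ 0 hrel

/-- a strategy realizing `rel(φ) ∧ ψ_k` (controlling additionally the fresh
proposition `p`) can be turned into a strategy realizing `φ` w.r.t. `2k`. -/
theorem alternating_color_ltl_to_prompt (ι ο : Type) [Fintype ι] [Fintype ο]
    (φ : Formula (ι ⊕ ο)) (k : ℕ) (hk : 1 ≤ k)
    (ψ : Formula (Option (ι ⊕ ο))) (hψ : isLTL ψ)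
    (hchar : ∀ w' : ℕ → Set (Option (ι ⊕ ο)), Sat w' 0 0 ψ ↔ Bounded k w')
    (σ' : List (Set ι) → Set (Option ο))
    (h : Realizes (fun a => some (Sum.inl a)) (Option.map Sum.inr) σ' 0
      (Formula.and (rel φ) ψ)) :
    ∃ σ : List (Set ι) → Set ο, Realizes Sum.inl Sum.inr σ (2 * k) φ :=
  alternating_color_ltl_to_prompt_general ι ο φ k ψ hchar σ' h

end PromptPaper
end

section
/- Let φ be a realizable Prompt-LTL formula over P with partition (I,O), let k_opt be the least bound such that φ is realizable with respect to k_opt, and assume k_opt ≥ 1. Let k* be the least k ≥ 1 such that the LTL formula rel(φ) ∧ ψ_k is realizable over (I, O∪{p}) (such k exists). Then k* ≤ k_opt ≤ 2k*; in particular, φ is realizable with respect to 2k* and the returned value 2k* is at most twice the optimal bound k_opt. -/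
namespace PromptPaper

variable {α ι ο π : Type}

/-! ### Auxiliary lemmas for the alternating-color technique -/

lemma noCP_const {w' : ℕ → Set (Option α)} {a b : ℕ}
    (h : ∀ l, a < l → l ≤ b → ¬ ChangePoint w' l) :
    ∀ m, a ≤ m → m ≤ b → ((none ∈ w' m) ↔ (none ∈ w' a)) := by
  intro m
  induction m with
  | zero =>
    intro h1 _
    have : a = 0 := by omega
    subst this
    exact Iff.rfl
  | succ m ih =>
    intro h1 h2
    by_cases hc : a = m + 1
    · subst hc; exact Iff.rfl
    · have hlt : a < m + 1 := by omega
      have hncp := h (m + 1) hlt h2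
      rw [ChangePoint] at hncp
      push_neg at hncp
      have hiff : (none ∈ w' m) ↔ (none ∈ w' (m + 1)) := by
        have h3 := hncp.2
        simpa using h3
      exact hiff.symm.trans (ih (by omega) (by omega))

lemma nextCP {w' : ℕ → Set (Option α)} (hinf : InfCP w') (a : ℕ) :
    ∃ c, a < c ∧ ChangePoint w' c ∧ ∀ l, a < l → l < c → ¬ ChangePoint w' l := by
  classical
  have hex : ∃ m, a < m ∧ ChangePoint w' m := hinf a
  refine ⟨Nat.find hex, (Nat.find_spec hex).1, (Nat.find_spec hex).2, ?_⟩
  intro l hl1 hl2 hcp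
  exact (Nat.find_min hex hl2) ⟨hl1, hcp⟩

lemma prevCP {w' : ℕ → Set (Option α)} (a : ℕ) :
    ∃ c, c ≤ a ∧ ChangePoint w' c ∧ ∀ l, c < l → l ≤ a → ¬ ChangePoint w' l := by
  classical
  refine ⟨Nat.findGreatest (ChangePoint w') a, Nat.findGreatest_le a, ?_, ?_⟩
  · exact Nat.findGreatest_spec (Nat.zero_le a) (Or.inl rfl)
  · intro l h1 h2
    exact Nat.findGreatest_is_greatest h1 h2

lemma constRun {w' : ℕ → Set (Option α)} {k a b : ℕ} (hbd : Bounded k w')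
    (hconst : ∀ m, a ≤ m → m ≤ b → ((none ∈ w' m) ↔ (none ∈ w' a)))
    (hab : a ≤ b) : b < a + k := by
  obtain ⟨c1, hc1a, hc1cp, hc1min⟩ := nextCP hbd.1 a
  by_cases hcb : c1 ≤ b
  · exfalso
    have h1 := hconst c1 (le_of_lt hc1a) hcb
    have h2 := hconst (c1 - 1) (by omega) (by omega)
    rcases hc1cp with h0 | hne
    · omega
    · exact hne (h2.trans h1.symm)
  · obtain ⟨c0, hc0a, hc0cp, hc0max⟩ := prevCP (w' := w') a
    have hadj : AdjacentCP w' c0 c1 := by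
      refine ⟨by omega, hc0cp, hc1cp, ?_⟩
      intro l hl1 hl2 hcp
      rcases le_or_gt l a with h | h
      · exact hc0max l hl1 h hcp
      · exact hc1min l h hl2 hcp
    have := hbd.2 c0 c1 hadj
    omega

lemma window {w' : ℕ → Set (Option α)} {k : ℕ} (hsp : Spaced k w') (n j : ℕ) (hj : j ≤ k) :
    (∀ m, m ≤ j → ((none ∈ w' (n + m)) ↔ (none ∈ w' n))) ∨
    ∃ c, 0 < c ∧ c ≤ j ∧ (∀ m, m < c → ((none ∈ w' (n + m)) ↔ (none ∈ w' n))) ∧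
      (∀ m, c ≤ m → m ≤ j → ¬ ((none ∈ w' (n + m)) ↔ (none ∈ w' n))) := by
  classical
  by_cases hex : ∃ c, 0 < c ∧ c ≤ j ∧ ChangePoint w' (n + c)
  · right
    have hc := Nat.find_spec hex
    set c := Nat.find hex with hcdef
    have hconst1 : ∀ m, m < c → ((none ∈ w' (n + m)) ↔ (none ∈ w' n)) := by
      intro m hm
      have hno : ∀ l, n < l → l ≤ n + m → ¬ ChangePoint w' l := by
        intro l h1 h2 hcp
        have hmin := Nat.find_min hex (show l - n < c by omega)
        push_neg at hmin
        have := hmin (by omega) (by omega)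
        rw [show n + (l - n) = l by omega] at this
        exact this hcp
      exact noCP_const hno (n + m) (by omega) (le_refl _)
    refine ⟨c, hc.1, hc.2.1, hconst1, ?_⟩
    intro m hcm hmj hiff
    have hno2 : ∀ l, n + c < l → l ≤ n + j → ¬ ChangePoint w' l := by
      intro l h1 h2 hcp
      obtain ⟨c2, h21, h22, h23⟩ := nextCP hsp.1 (n + c)
      have hc2l : c2 ≤ l := by
        by_contra hlt
        push_neg at hlt
        exact h23 l h1 hlt hcp
      have hadj : AdjacentCP w' (n + c) c2 := ⟨h21, hc.2.2, h22, h23⟩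
      have := hsp.2 _ _ hadj
      have h1c : 0 < c := hc.1
      have h2c : c ≤ j := hc.2.1
      omega
    have hconst2 := noCP_const hno2
    have hmv : (none ∈ w' (n + m)) ↔ (none ∈ w' (n + c)) :=
      hconst2 (n + m) (by omega) (by omega)
    have hbefore : (none ∈ w' (n + c - 1)) ↔ (none ∈ w' n) := by
      have h := hconst1 (c - 1) (by omega)
      rwa [show n + (c - 1) = n + c - 1 by omega] at h
    have hcp' : ¬ ((none ∈ w' (n + c - 1)) ↔ (none ∈ w' (n + c))) := by
      rcases hc.2.2 with h0 | h
      · omega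
      · exact h
    exact hcp' (hbefore.trans (hmv.symm.trans hiff).symm)
  · left
    intro m hm
    push_neg at hex
    have hno : ∀ l, n < l → l ≤ n + m → ¬ ChangePoint w' l := by
      intro l h1 h2 hcp
      have := hex (l - n) (by omega) (by omega)
      rw [show n + (l - n) = l by omega] at this
      exact this hcp
    exact noCP_const hno (n + m) (by omega) (le_refl _)

lemma lemA {w' : ℕ → Set (Option α)} {w : ℕ → Set α} {k : ℕ}
    (hcol : IsColoring w' w) (hsp : Spaced k w') :
    ∀ (φ : Formula α) (n : ℕ), Sat w k n φ → Sat w' 0 n (rel φ) := by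
  intro φ
  induction φ with
  | atom a => intro n h; exact (hcol n a).mpr h
  | natom a => intro n h; exact fun hc => h ((hcol n a).mp hc)
  | and φ ψ ihφ ihψ => intro n h; exact ⟨ihφ n h.1, ihψ n h.2⟩
  | or φ ψ ihφ ihψ =>
      intro n h
      exact h.elim (fun h => Or.inl (ihφ n h)) (fun h => Or.inr (ihψ n h))
  | next φ ih => intro n h; exact ih (n + 1) h
  | untl φ ψ ihφ ihψ =>
      rintro n ⟨j, h1, h2⟩
      exact ⟨j, ihψ _ h1, fun m hm => ihφ _ (h2 m hm)⟩
  | release φ ψ ihφ ihψ =>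
      intro n h j
      rcases h j with h1 | ⟨m, hm, h2⟩
      · exact Or.inl (ihψ _ h1)
      · exact Or.inr ⟨m, hm, ihφ _ h2⟩
  | promptF φ ih =>
      rintro n ⟨j, hj, hsat⟩
      have hφ' := ih _ hsat
      show Sat w' 0 n (.and (.or (.natom none) (.untl (.atom none) (.untl (.natom none) (rel φ))))
        (.or (.atom none) (.untl (.natom none) (.untl (.atom none) (rel φ)))))
      simp only [Sat]
      rcases window hsp n j hj with hconst | ⟨c, hc0, hcj, hbef, haft⟩
      · by_cases hP : none ∈ w' n
        · refine ⟨Or.inr ⟨j, ⟨0, by simpa using hφ', fun m hm => by omega⟩, ?_⟩, Or.inl hP⟩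
          intro m hm
          exact (hconst m (by omega)).mpr hP
        · refine ⟨Or.inl hP, Or.inr ⟨j, ⟨0, by simpa using hφ', fun m hm => by omega⟩, ?_⟩⟩
          intro m hm hmem
          exact hP ((hconst m (by omega)).mp hmem)
      · by_cases hP : none ∈ w' n
        · refine ⟨Or.inr ⟨c, ⟨j - c, ?_, ?_⟩, fun m hm => (hbef m hm).mpr hP⟩, Or.inl hP⟩
          · rw [show n + c + (j - c) = n + j by omega]
            exact hφ'
          · intro m hm hmem
            have h := haft (c + m) (by omega) (by omega)
            rw [show n + (c + m) = n + c + m by omega] at h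
            exact h (iff_of_true hmem hP)
        · refine ⟨Or.inl hP, Or.inr ⟨c, ⟨j - c, ?_, ?_⟩,
            fun m hm hmem => hP ((hbef m hm).mp hmem)⟩⟩
          · rw [show n + c + (j - c) = n + j by omega]
            exact hφ'
          · intro m hm
            have h := haft (c + m) (by omega) (by omega)
            rw [show n + (c + m) = n + c + m by omega] at h
            by_contra hno
            exact h (iff_of_false hno hP)

lemma lemB {w' : ℕ → Set (Option α)} {w : ℕ → Set α} {k : ℕ}
    (hcol : IsColoring w' w) (hbd : Bounded k w') :
    ∀ (φ : Formula α) (n : ℕ), Sat w' 0 n (rel φ) → Sat w (2 * k) n φ := by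
  intro φ
  induction φ with
  | atom a => intro n h; exact (hcol n a).mp h
  | natom a => intro n h; exact fun hc => h ((hcol n a).mpr hc)
  | and φ ψ ihφ ihψ => intro n h; exact ⟨ihφ n h.1, ihψ n h.2⟩
  | or φ ψ ihφ ihψ =>
      intro n h
      exact h.elim (fun h => Or.inl (ihφ n h)) (fun h => Or.inr (ihψ n h))
  | next φ ih => intro n h; exact ih (n + 1) h
  | untl φ ψ ihφ ihψ =>
      rintro n ⟨j, h1, h2⟩
      exact ⟨j, ihψ _ h1, fun m hm => ihφ _ (h2 m hm)⟩
  | release φ ψ ihφ ihψ =>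
      intro n h j
      rcases h j with h1 | ⟨m, hm, h2⟩
      · exact Or.inl (ihψ _ h1)
      · exact Or.inr ⟨m, hm, ihφ _ h2⟩
  | promptF φ ih =>
      intro n h
      replace h : Sat w' 0 n (.and (.or (.natom none)
          (.untl (.atom none) (.untl (.natom none) (rel φ))))
        (.or (.atom none) (.untl (.natom none) (.untl (.atom none) (rel φ))))) := h
      simp only [Sat] at h
      obtain ⟨h1, h2⟩ := h
      by_cases hP : none ∈ w' n
      · rcases h1 with hn | ⟨j₁, ⟨j₂, hrel, hmid⟩, hout⟩
        · exact absurd hP hn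
        · have hb1 : j₁ ≤ k := by
            rcases Nat.eq_zero_or_pos j₁ with h0 | hpos
            · omega
            · have hc1 : ∀ m, n ≤ m → m ≤ n + j₁ - 1 →
                  ((none ∈ w' m) ↔ (none ∈ w' n)) := by
                intro m hm1 hm2
                have hmem := hout (m - n) (by omega)
                rw [show n + (m - n) = m by omega] at hmem
                exact iff_of_true hmem hP
              have := constRun hbd hc1 (by omega)
              omega
          have hb2 : j₂ ≤ k := by
            rcases Nat.eq_zero_or_pos j₂ with h0 | hpos
            · omega
            · have hbase : none ∉ w' (n + j₁) := by simpa using hmid 0 hpos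
              have hc2 : ∀ m, n + j₁ ≤ m → m ≤ n + j₁ + j₂ - 1 →
                  ((none ∈ w' m) ↔ (none ∈ w' (n + j₁))) := by
                intro m hm1 hm2
                have hmem := hmid (m - (n + j₁)) (by omega)
                rw [show n + j₁ + (m - (n + j₁)) = m by omega] at hmem
                exact iff_of_false hmem hbase
              have := constRun hbd hc2 (by omega)
              omega
          refine ⟨j₁ + j₂, by omega, ?_⟩
          rw [show n + (j₁ + j₂) = n + j₁ + j₂ by omega]
          exact ih _ hrel
      · rcases h2 with hn | ⟨j₁, ⟨j₂, hrel, hmid⟩, hout⟩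
        · exact absurd hn hP
        · have hb1 : j₁ ≤ k := by
            rcases Nat.eq_zero_or_pos j₁ with h0 | hpos
            · omega
            · have hc1 : ∀ m, n ≤ m → m ≤ n + j₁ - 1 →
                  ((none ∈ w' m) ↔ (none ∈ w' n)) := by
                intro m hm1 hm2
                have hmem := hout (m - n) (by omega)
                rw [show n + (m - n) = m by omega] at hmem
                exact iff_of_false hmem hP
              have := constRun hbd hc1 (by omega)
              omega
          have hb2 : j₂ ≤ k := by
            rcases Nat.eq_zero_or_pos j₂ with h0 | hpos
            · omega
            · have hbase : none ∈ w' (n + j₁) := by simpa using hmid 0 hpos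
              have hc2 : ∀ m, n + j₁ ≤ m → m ≤ n + j₁ + j₂ - 1 →
                  ((none ∈ w' m) ↔ (none ∈ w' (n + j₁))) := by
                intro m hm1 hm2
                have hmem := hmid (m - (n + j₁)) (by omega)
                rw [show n + j₁ + (m - (n + j₁)) = m by omega] at hmem
                exact iff_of_true hmem hbase
              have := constRun hbd hc2 (by omega)
              omega
          refine ⟨j₁ + j₂, by omega, ?_⟩
          rw [show n + (j₁ + j₂) = n + j₁ + j₂ by omega]
          exact ih _ hrel

lemma coloring_play {i : ℕ → Set ι} {σ : List (Set ι) → Set ο}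
    {σ' : List (Set ι) → Set (Option ο)}
    (hσ : ∀ (l : List (Set ι)) (x : ο), some x ∈ σ' l ↔ x ∈ σ l) :
    IsColoring (play (fun a => some (Sum.inl a)) (Option.map Sum.inr) i σ')
      (play Sum.inl Sum.inr i σ) := by
  intro n x
  cases x with
  | inl a =>
    constructor
    · rintro (⟨b, hb, he⟩ | ⟨y, hy, he⟩)
      · obtain rfl : b = a := by simpa using he
        exact Or.inl ⟨b, hb, rfl⟩
      · cases y with
        | none => simp at he
        | some o => simp at he
    · rintro (⟨b, hb, he⟩ | ⟨o, ho, he⟩)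
      · obtain rfl : b = a := by simpa using he
        exact Or.inl ⟨b, hb, rfl⟩
      · simp at he
  | inr o =>
    constructor
    · rintro (⟨b, hb, he⟩ | ⟨y, hy, he⟩)
      · simp at he
      · cases y with
        | none => simp at he
        | some o' =>
          obtain rfl : o' = o := by simpa using he
          exact Or.inr ⟨o', (hσ _ o').mp hy, rfl⟩
    · rintro (⟨b, hb, he⟩ | ⟨o', ho', he⟩)
      · simp at he
      · obtain rfl : o' = o := by simpa using he
        exact Or.inr ⟨some o', (hσ _ o').mpr ho', rfl⟩

lemma none_play {i : ℕ → Set ι} {σ' : List (Set ι) → Set (Option ο)} (n : ℕ) :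
    (none ∈ play (fun a : ι => some (Sum.inl a)) (Option.map Sum.inr) i σ' n) ↔
      none ∈ σ' ((List.range (n + 1)).map i) := by
  constructor
  · rintro (⟨b, hb, he⟩ | ⟨y, hy, he⟩)
    · simp at he
    · cases y with
      | none => exact hy
      | some o => simp at he
  · intro h
    exact Or.inr ⟨none, h, rfl⟩

lemma altCP {k : ℕ} (hk : 1 ≤ k) (w' : ℕ → Set (Option α))
    (hnone : ∀ n, (none ∈ w' n) ↔ (n / k) % 2 = 0) :
    ∀ n, ChangePoint w' n ↔ k ∣ n := by
  intro n
  rcases n with _ | m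
  · exact ⟨fun _ => dvd_zero k, fun _ => Or.inl rfl⟩
  · rw [ChangePoint]
    simp only [hnone, Nat.add_sub_cancel]
    constructor
    · rintro (h0 | hne)
      · omega
      · by_contra hnd
        rw [Nat.succ_div, if_neg hnd] at hne
        omega
    · intro hd
      right
      rw [Nat.succ_div, if_pos hd]
      omega

lemma dvd_adj {w' : ℕ → Set (Option α)} {k : ℕ} (hk : 1 ≤ k)
    (hcp : ∀ n, ChangePoint w' n ↔ k ∣ n) :
    Spaced k w' ∧ Bounded k w' := by
  have hinf : InfCP w' := by
    intro n
    refine ⟨k * (n + 1), ?_, (hcp _).mpr ⟨n + 1, rfl⟩⟩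
    calc n < n + 1 := Nat.lt_succ_self n
    _ ≤ k * (n + 1) := Nat.le_mul_of_pos_left _ hk
  have hdiff : ∀ m m', AdjacentCP w' m m' → m' - m = k := by
    rintro m m' ⟨hlt, hcpm, hcpm', hbet⟩
    rw [hcp] at hcpm hcpm'
    obtain ⟨a, rfl⟩ := hcpm
    obtain ⟨b, rfl⟩ := hcpm'
    have hab : a < b := Nat.lt_of_mul_lt_mul_left hlt
    have hble : b ≤ a + 1 := by
      by_contra hgt
      push_neg at hgt
      have he1 : k * (a + 1) = k * a + k := by ring
      have hle : k * (a + 2) ≤ k * b := Nat.mul_le_mul_left k (by omega)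
      have he2 : k * (a + 2) = k * a + 2 * k := by ring
      have hb : ¬ ChangePoint w' (k * (a + 1)) := hbet _ (by omega) (by omega)
      exact hb ((hcp _).mpr ⟨a + 1, rfl⟩)
    have hbe : b = a + 1 := by omega
    subst hbe
    have : k * (a + 1) = k * a + k := by ring
    omega
  exact ⟨⟨hinf, fun m m' h => (hdiff m m' h).ge⟩,
    ⟨hinf, fun m m' h => (hdiff m m' h).le⟩⟩

/-- the approximation algorithm. If `k_opt ≥ 1` is the least bound realizing
`φ` and `k*` is the least `k ≥ 1` such that `rel(φ) ∧ ψ_k` is realizable (such `k` exists),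
then `k* ≤ k_opt ≤ 2k*`; in particular `φ` is realizable w.r.t. `2k*`. -/
theorem approximation_within_factor_two (ι ο : Type) [Fintype ι] [Fintype ο]
    (φ : Formula (ι ⊕ ο)) (Ψ : ℕ → Formula (Option (ι ⊕ ο)))
    (hΨ : ∀ k, 1 ≤ k → isLTL (Ψ k) ∧
      ∀ w' : ℕ → Set (Option (ι ⊕ ο)), Sat w' 0 0 (Ψ k) ↔ Bounded k w')
    (kopt : ℕ)
    (hopt : IsLeast {k : ℕ | ∃ σ : List (Set ι) → Set ο, Realizes Sum.inl Sum.inr σ k φ} kopt)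
    (hkopt : 1 ≤ kopt) :
    (∃ k : ℕ, 1 ≤ k ∧ ∃ σ' : List (Set ι) → Set (Option ο),
      Realizes (fun a => some (Sum.inl a)) (Option.map Sum.inr) σ' 0
        (Formula.and (rel φ) (Ψ k))) ∧
    ∀ kstar : ℕ,
      IsLeast {k : ℕ | 1 ≤ k ∧ ∃ σ' : List (Set ι) → Set (Option ο),
        Realizes (fun a => some (Sum.inl a)) (Option.map Sum.inr) σ' 0
          (Formula.and (rel φ) (Ψ k))} kstar →
      kstar ≤ kopt ∧ kopt ≤ 2 * kstar ∧
        ∃ σ : List (Set ι) → Set ο, Realizes Sum.inl Sum.inr σ (2 * kstar) φ := by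
  classical
  obtain ⟨σ0, hσ0⟩ := hopt.1
  set σ1 : List (Set ι) → Set (Option ο) :=
    fun l => (some '' σ0 l) ∪ {x | x = none ∧ ((l.length - 1) / kopt) % 2 = 0} with hσ1
  have hmem : ∀ (l : List (Set ι)) (x : ο), some x ∈ σ1 l ↔ x ∈ σ0 l := by
    intro l x
    simp [hσ1]
  have hnone1 : ∀ l, (none ∈ σ1 l) ↔ ((l.length - 1) / kopt) % 2 = 0 := by
    intro l
    simp [hσ1]
  have hkopt_mem : kopt ∈ {k : ℕ | 1 ≤ k ∧ ∃ σ' : List (Set ι) → Set (Option ο),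
      Realizes (fun a => some (Sum.inl a)) (Option.map Sum.inr) σ' 0
        (Formula.and (rel φ) (Ψ k))} := by
    refine ⟨hkopt, σ1, ?_⟩
    intro i
    set w' := play (fun a : ι => some (Sum.inl a)) (Option.map Sum.inr) i σ1 with hw'
    have hcol : IsColoring w' (play Sum.inl Sum.inr i σ0) :=
      coloring_play (fun l x => hmem l x)
    have hnn : ∀ n, (none ∈ w' n) ↔ (n / kopt) % 2 = 0 := by
      intro n
      rw [hw', none_play, hnone1]
      simp
    have hcp := altCP hkopt w' hnn
    obtain ⟨hsp, hbd⟩ := dvd_adj hkopt hcp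
    exact ⟨lemA hcol hsp φ 0 (hσ0 i), ((hΨ kopt hkopt).2 w').mpr hbd⟩
  refine ⟨⟨kopt, hkopt_mem⟩, ?_⟩
  intro kstar hks
  obtain ⟨hk1, σ', hσ'⟩ := hks.1
  have hreal : ∃ σ : List (Set ι) → Set ο, Realizes Sum.inl Sum.inr σ (2 * kstar) φ := by
    refine ⟨fun l => {o | some o ∈ σ' l}, ?_⟩
    intro i
    have hcol : IsColoring (play (fun a : ι => some (Sum.inl a)) (Option.map Sum.inr) i σ')
        (play Sum.inl Sum.inr i (fun l => {o | some o ∈ σ' l})) :=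
      coloring_play (fun l x => Iff.rfl)
    have hsat : Sat (play (fun a : ι => some (Sum.inl a)) (Option.map Sum.inr) i σ') 0 0
        (Formula.and (rel φ) (Ψ kstar)) := hσ' i
    simp only [Sat] at hsat
    exact lemB hcol (((hΨ kstar hk1).2 _).mp hsat.2) φ 0 hsat.1
  exact ⟨hks.2 hkopt_mem, hopt.2 hreal, hreal⟩

end PromptPaper
end

section
/- For every r ≥ 1 and every r_p with 0 ≤ r_p ≤ r, every strategy that realizes the arbiter formula φ_{r,r_p} with respect to some bound requires at least r−1 memory states, i.e., it cannot be implemented by a memory structure with fewer than r−1 states. -/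
namespace PromptPaper

variable {α ι ο π : Type}

/- Raise every request at once at time 0 and stay silent afterwards. Each request must
eventually be granted, and no two are granted at the same time. From time 1 on the input is constant,
so the grant issued at a time `n > 0` is determined by the memory state reached at `n`; hence the
requests granted after time 0 inject into the memory states, and at most one is granted at time 0. -/

section Semantics

variable {α : Type} (w : ℕ → Set α) (k n : ℕ) (a : α)

lemma sat_ltrue : Sat w k n (ltrue a) :=
  em _

lemma sat_conj (l : List (Formula α)) : Sat w k n (conj a l) ↔ ∀ φ ∈ l, Sat w k n φ := by
  induction l with
  | nil => simpa [conj] using sat_ltrue w k n a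
  | cons φ l ih => exact (and_congr_right fun _ => ih).trans List.forall_mem_cons.symm

lemma sat_glob (φ : Formula α) : Sat w k n (glob a φ) ↔ ∀ j, Sat w k (n + j) φ :=
  forall_congr' fun _ => or_iff_left fun ⟨_, _, hm⟩ => hm.2 hm.1

lemma sat_ev (φ : Formula α) : Sat w k n (ev a φ) ↔ ∃ j, Sat w k (n + j) φ :=
  exists_congr fun _ => and_iff_left fun _ _ => sat_ltrue w k _ a

end Semantics

section Arbiter

variable {r rp : ℕ} {hr : 0 < r} {w : ℕ → Set (Fin r ⊕ Fin r)} {k : ℕ}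

lemma Sat.arbiter_eventually_grants (h : Sat w k 0 (arbiter r rp hr)) {n : ℕ} {q : Fin r}
    (hq : Sum.inl q ∈ w n) : ∃ j, Sum.inr q ∈ w (n + j) := by
  obtain ⟨hprompt, hlive, -⟩ := h
  rw [sat_conj] at hprompt hlive
  by_cases hqrp : q.val < rp
  · have := (sat_glob w k 0 _ _).mp (hprompt _ (List.mem_map_of_mem
      (List.mem_filter.mpr ⟨List.mem_finRange q, decide_eq_true hqrp⟩))) n
    rw [zero_add] at this
    obtain ⟨j, -, hj⟩ := this.resolve_left (not_not.mpr hq)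
    exact ⟨j, hj⟩
  · have := (sat_glob w k 0 _ _).mp (hlive _ (List.mem_map_of_mem
      (List.mem_filter.mpr ⟨List.mem_finRange q, decide_eq_true (not_lt.mp hqrp)⟩))) n
    rw [zero_add] at this
    exact (sat_ev w k n _ _).mp (this.resolve_left (not_not.mpr hq))

lemma Sat.arbiter_mutex (h : Sat w k 0 (arbiter r rp hr)) (n : ℕ) :
    {q : Fin r | Sum.inr q ∈ w n}.Subsingleton := by
  intro q hq q' hq'
  by_contra hne
  obtain ⟨-, -, hexcl⟩ := h
  rw [sat_conj] at hexcl
  have := (sat_glob w k 0 _ _).mp (hexcl _ (List.mem_flatMap.mpr ⟨q, List.mem_finRange q,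
    List.mem_map_of_mem (List.mem_filter.mpr ⟨List.mem_finRange q', decide_eq_true hne⟩)⟩)) n
  rw [zero_add] at this
  exact this.elim (· hq) (· hq')

end Arbiter

section Strategies

variable {ι ο : Type}

lemma mem_play_inl {i : ℕ → Set ι} {σ : List (Set ι) → Set ο} {n : ℕ} {x : ι} :
    (Sum.inl x : ι ⊕ ο) ∈ play Sum.inl Sum.inr i σ n ↔ x ∈ i n := by
  simp [play]

lemma mem_play_inr {i : ℕ → Set ι} {σ : List (Set ι) → Set ο} {n : ℕ} {y : ο} :
    (Sum.inr y : ι ⊕ ο) ∈ play Sum.inl Sum.inr i σ n ↔ y ∈ σ ((List.range (n + 1)).map i) := by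
  simp [play]

lemma Implements.apply_range_succ {M : Type} {m0 : M} {upd : M → Set ι → M}
    {nxt : M → Set ι → Set ο} {σ : List (Set ι) → Set ο} (himpl : Implements m0 upd nxt σ)
    (i : ℕ → Set ι) (n : ℕ) :
    σ ((List.range (n + 1)).map i) = nxt (updStar upd m0 ((List.range n).map i)) (i n) := by
  rw [List.range_succ, List.map_append, List.map_singleton, himpl]

end Strategies

lemma card_le_card_add_one_of_factors {ο M : Type} [Fintype ο] [Fintype M] {out : ℕ → Set ο}
    {s : ℕ → M} {g : M → Set ο} (hcover : ∀ o, ∃ n, o ∈ out n)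
    (hsub : ∀ n, (out n).Subsingleton) (hfac : ∀ n, 0 < n → out n = g (s n)) :
    Fintype.card ο ≤ Fintype.card M + 1 := by
  classical
  choose t ht using hcover
  let f : ο → Option M := fun o => if t o = 0 then none else some (s (t o))
  have hf : Function.Injective f := by
    intro o o' hoo'
    suffices out (t o) = out (t o') from hsub (t o') (this ▸ ht o) (ht o')
    by_cases h : t o = 0 <;> by_cases h' : t o' = 0 <;> simp only [f, h, h', if_true,
      if_false, reduceCtorEq, Option.some.injEq] at hoo'
    · rw [h, h']
    · rw [hfac _ (Nat.pos_of_ne_zero h), hfac _ (Nat.pos_of_ne_zero h'), hoo']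
  simpa using Fintype.card_le_of_injective f hf

theorem arbiter_memory_lower_bound_general (r rp : ℕ) (hr : 0 < r)
    (σ : List (Set (Fin r)) → Set (Fin r)) (k : ℕ)
    (hreal : Realizes Sum.inl Sum.inr σ k (arbiter r rp hr))
    (M : Type) (instM : Fintype M) (m0 : M) (upd : M → Set (Fin r) → M)
    (nxt : M → Set (Fin r) → Set (Fin r)) (himpl : Implements m0 upd nxt σ) :
    r - 1 ≤ Fintype.card M := by
  let burst : ℕ → Set (Fin r) := fun n => if n = 0 then Set.univ else ∅
  have hsat := hreal burst
  have hcover (q : Fin r) : ∃ n, q ∈ σ ((List.range (n + 1)).map burst) := by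
    obtain ⟨n, hn⟩ := hsat.arbiter_eventually_grants (n := 0) (mem_play_inl.mpr (by simp [burst]))
    exact ⟨0 + n, mem_play_inr.mp hn⟩
  have hsub (n : ℕ) : (σ ((List.range (n + 1)).map burst)).Subsingleton := by
    simpa only [mem_play_inr, Set.ofPred_mem_eq] using hsat.arbiter_mutex n
  have hfac (n : ℕ) (hn : 0 < n) : σ ((List.range (n + 1)).map burst) =
      nxt (updStar upd m0 ((List.range n).map burst)) ∅ := by
    rw [himpl.apply_range_succ, show burst n = ∅ from if_neg hn.ne']
  have := card_le_card_add_one_of_factors (g := (nxt · ∅)) hcover hsub hfac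
  rw [Fintype.card_fin] at this
  omega

/-- every strategy realizing the arbiter formula `φ_{r, rp}` with respect to
some bound requires at least `r - 1` memory states. -/
theorem arbiter_memory_lower_bound (r rp : ℕ) (hr : 0 < r) (hrp : rp ≤ r)
    (σ : List (Set (Fin r)) → Set (Fin r)) (k : ℕ)
    (hreal : Realizes Sum.inl Sum.inr σ k (arbiter r rp hr))
    (M : Type) (instM : Fintype M) (m0 : M) (upd : M → Set (Fin r) → M)
    (nxt : M → Set (Fin r) → Set (Fin r)) (himpl : Implements m0 upd nxt σ) :
    r - 1 ≤ Fintype.card M :=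
  arbiter_memory_lower_bound_general r rp hr σ k hreal M instM m0 upd nxt himpl

end PromptPaper
end
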